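/- For fixed partitions μ and ν, there exists a partition λ with |λ| = k and N_{μ,ν,λ} > 0 if and only if k ≡ |μ Δ ν| (mod 2) and |μ Δ ν| ≤ k ≤ |μ| + |ν|, where |μ Δ ν| = |μ| + |ν| − 2|μ ∧ ν| is the size of the symmetric difference of the Young diagrams. -/

import Mathlib

open YoungDiagram

/-- An LR (Littlewood–Richardson) filling witnessing the Littlewood–Richardson
coefficient `c^lam_{μ,ν}`: a ballot (lattice-word) semistandard filling of the skew
shape `lam/μ` with content `ν`.  The entry in row `i`, column `j` is `T i j`;
entries are `≥ 1` on the cells of `lam/μ` and `0` elsewhere. -/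
structure LRFilling (μ ν lam : YoungDiagram) : Type where
  sub : μ ≤ lam
  T : ℕ → ℕ → ℕ
  supp : ∀ i j, T i j ≠ 0 ↔ ((i, j) ∈ lam ∧ (i, j) ∉ μ)
  rows_weak : ∀ i j₁ j₂, j₁ ≤ j₂ → T i j₁ ≠ 0 → T i j₂ ≠ 0 → T i j₁ ≤ T i j₂
  cols_strict : ∀ i₁ i₂ j, i₁ < i₂ → T i₁ j ≠ 0 → T i₂ j ≠ 0 → T i₁ j < T i₂ j
  content : ∀ k : ℕ, Nat.card {p : ℕ × ℕ // T p.1 p.2 = k + 1} = ν.rowLen k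
  ballot : ∀ i j k : ℕ,
    Nat.card {p : ℕ × ℕ // (p.1 < i ∨ (p.1 = i ∧ j ≤ p.2)) ∧ T p.1 p.2 = k + 2} ≤
      Nat.card {p : ℕ × ℕ // (p.1 < i ∨ (p.1 = i ∧ j ≤ p.2)) ∧ T p.1 p.2 = k + 1}

/-- The Littlewood–Richardson coefficient `c^lam_{μ,ν}`. -/
noncomputable def lrCoeff (μ ν lam : YoungDiagram) : ℕ := Nat.card (LRFilling μ ν lam)

/-- The Newell–Littlewood number
`N_{μ,ν,lam} = Σ_{α,β,γ} c^μ_{α,β} c^ν_{α,γ} c^lam_{β,γ}`,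
realized as the cardinality of the set of triples of LR fillings over all `α,β,γ`. -/
noncomputable def NL (μ ν lam : YoungDiagram) : ℕ :=
  Nat.card (Σ α β γ : YoungDiagram,
    (LRFilling α β μ × LRFilling α γ ν × LRFilling β γ lam))

/-!
Any triple of LR fillings for `c^μ_{α,β}`, `c^ν_{α,γ}`, `c^λ_{β,γ}` has `|α| + |β| = |μ|`,
`|α| + |γ| = |ν|`, `|β| + |γ| = |λ|` and `α ⊆ μ ∩ ν`, so `|λ| = |μ| + |ν| - 2|α|` with
`|α| ≤ |μ ∩ ν|`. Conversely, every `α ⊆ μ ∩ ν` is realised: numbering each column of `μ / α`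
(and of `ν / α`) as `1, 2, 3, …` from the top is an LR filling whose content `β` (resp. `γ`)
has `β_k` = the number of columns longer than `k`, and filling row `i` of `(β + γ) / β` with `i + 1`
is an LR filling of content `γ`. Since `μ ∩ ν` has subdiagrams of every size, all admissible
`k` occur.
-/

open Finset

namespace YoungDiagram

lemma card_mono {μ ν : YoungDiagram} (h : μ ≤ ν) : μ.card ≤ ν.card :=
  card_le_card (cells_subset_iff.mpr h)

lemma rowLen_le_card (μ : YoungDiagram) (i : ℕ) : μ.rowLen i ≤ μ.card := by
  rw [rowLen_eq_card]
  exact card_le_card (filter_subset _ _)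

lemma colLen_le_card (μ : YoungDiagram) (j : ℕ) : μ.colLen j ≤ μ.card := by
  rw [colLen_eq_card]
  exact card_le_card (filter_subset _ _)

lemma lt_colLen_zero_of_mem {μ : YoungDiagram} {i j : ℕ} (h : (i, j) ∈ μ) : i < μ.colLen 0 :=
  mem_iff_lt_colLen.mp (μ.up_left_mem le_rfl (Nat.zero_le j) h)

lemma lt_rowLen_zero_of_mem {μ : YoungDiagram} {i j : ℕ} (h : (i, j) ∈ μ) : j < μ.rowLen 0 :=
  mem_iff_lt_rowLen.mp (μ.up_left_mem (Nat.zero_le i) le_rfl h)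

lemma rowLen_eq_zero_of_colLen_le {μ : YoungDiagram} {i : ℕ} (h : μ.colLen 0 ≤ i) :
    μ.rowLen i = 0 := by
  by_contra hi
  have := lt_colLen_zero_of_mem (mem_iff_lt_rowLen.mpr (Nat.pos_of_ne_zero hi))
  omega

lemma card_eq_sum_rowLen (μ : YoungDiagram) :
    μ.card = ∑ i ∈ range (μ.colLen 0), μ.rowLen i := by
  refine (card_eq_sum_card_fiberwise fun p hp => ?_).trans
    (sum_congr rfl fun i _ => (rowLen_eq_card μ).symm)
  exact mem_range.mpr (lt_colLen_zero_of_mem (by simpa using hp))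

lemma eq_of_rowLen_eq {μ ν : YoungDiagram} (h : ∀ i, μ.rowLen i = ν.rowLen i) : μ = ν := by
  ext ⟨i, j⟩
  rw [mem_cells, mem_cells, mem_iff_lt_rowLen, mem_iff_lt_rowLen, h]

/-- The diagram with row lengths `f 0, …, f (n - 1)`. -/
def ofAntitone (f : ℕ → ℕ) (hf : Antitone f) (n : ℕ) : YoungDiagram where
  cells := (range n ×ˢ range (f 0)).filter fun p => p.2 < f p.1
  isLowerSet := by
    rintro ⟨i, j⟩ ⟨i', j'⟩ ⟨hi, hj⟩ hp
    simp only [coe_filter, mem_product, mem_range, Set.mem_ofPred_eq] at hi hj hp ⊢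
    have := hf hi
    refine ⟨⟨?_, ?_⟩, ?_⟩ <;> omega

section ofAntitone
variable {f : ℕ → ℕ} {hf : Antitone f} {n : ℕ}

lemma mem_ofAntitone (hn : f n = 0) {i j : ℕ} : (i, j) ∈ ofAntitone f hf n ↔ j < f i := by
  change _ ∈ filter _ _ ↔ _
  simp only [mem_filter, mem_product, mem_range, and_iff_right_iff_imp]
  intro hj
  have := hf (Nat.zero_le i)
  refine ⟨?_, by omega⟩
  by_contra hin
  have := hf (not_lt.mp hin)
  omega

lemma rowLen_ofAntitone (hn : f n = 0) (i : ℕ) : (ofAntitone f hf n).rowLen i = f i :=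
  eq_of_forall_lt_iff fun j => by rw [← mem_iff_lt_rowLen, mem_ofAntitone hn]

end ofAntitone

lemma exists_le_card_add_one {δ : YoungDiagram} (h : δ.cells.Nonempty) :
    ∃ δ' ≤ δ, δ'.card + 1 = δ.card := by
  obtain ⟨c, hc⟩ := δ.cells.exists_maximal h
  refine ⟨⟨δ.cells.erase c, ?_⟩, fun p hp => mem_of_mem_erase hp, card_erase_add_one hc.prop⟩
  intro p q hqp hp
  simp only [coe_erase, Set.mem_sdiff, mem_coe, Set.mem_singleton_iff] at hp ⊢
  exact ⟨δ.isLowerSet hqp hp.1, fun hqc => hp.2 (hc.eq_of_le hp.1 (hqc ▸ hqp)).symm⟩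

lemma exists_le_card_eq (δ : YoungDiagram) {m : ℕ} (hm : m ≤ δ.card) :
    ∃ α ≤ δ, α.card = m := by
  obtain ⟨d, hd⟩ := Nat.exists_eq_add_of_le hm
  clear hm
  induction d generalizing δ with
  | zero => exact ⟨δ, le_rfl, hd⟩
  | succ d ih =>
    obtain ⟨δ', hδ', hcard⟩ := exists_le_card_add_one (card_pos.mp (by omega : 0 < δ.card))
    obtain ⟨α, hα, rfl⟩ := ih δ' (by omega)
    exact ⟨α, hα.trans hδ', rfl⟩

end YoungDiagram

namespace LRFilling

section
variable {α β μ : YoungDiagram} (F : LRFilling α β μ)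

lemma mem_of_T_ne_zero {i j : ℕ} (h : F.T i j ≠ 0) : (i, j) ∈ μ :=
  ((F.supp i j).mp h).1

lemma card_filter_T_eq (k : ℕ) :
    (μ.cells.filter fun p => F.T p.1 p.2 = k + 1).card = β.rowLen k := by
  rw [← F.content k, ← Nat.card_eq_finsetCard]
  exact Nat.card_congr (Equiv.subtypeEquivRight fun p => by
    simpa using fun h => F.mem_of_T_ne_zero (i := p.1) (j := p.2) (by omega))

lemma T_le_colLen_zero (i j : ℕ) : F.T i j ≤ β.colLen 0 := by
  obtain h | h := Nat.eq_zero_or_pos (F.T i j)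
  · omega
  have hrow : 0 < β.rowLen (F.T i j - 1) := by
    rw [← F.card_filter_T_eq]
    exact card_pos.mpr ⟨(i, j), mem_filter.mpr
      ⟨(mem_cells _).mpr (F.mem_of_T_ne_zero h.ne'), show F.T i j = _ + 1 by omega⟩⟩
  have := mem_iff_lt_colLen.mp (mem_iff_lt_rowLen.mpr hrow)
  omega

/-- The cells of `μ / α` are partitioned by their entries `1, …, β.colLen 0`, with `β.rowLen k`
cells carrying `k + 1`. -/
theorem card_add_card (F : LRFilling α β μ) : α.card + β.card = μ.card := by
  have hskew : (μ.cells \ α.cells).card = β.card := by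
    rw [card_eq_sum_rowLen, card_eq_sum_card_fiberwise (f := fun p => F.T p.1 p.2 - 1)]
    · refine sum_congr rfl fun k _ => ?_
      rw [← F.card_filter_T_eq]
      congr 1
      ext ⟨i, j⟩
      have hsupp := F.supp i j
      simp only [mem_filter, mem_sdiff, mem_cells, ← hsupp]
      constructor
      · rintro ⟨hne, hk⟩
        exact ⟨(hsupp.mp hne).1, by omega⟩
      · rintro ⟨-, hk⟩
        exact ⟨by omega, by omega⟩
    · rintro ⟨i, j⟩ hp
      simp only [coe_sdiff, Set.mem_sdiff, mem_coe, mem_cells, coe_range, Set.mem_Iio] at hp ⊢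
      have := (F.supp i j).mpr hp
      have := F.T_le_colLen_zero i j
      omega
  rw [← hskew, add_comm]
  exact card_sdiff_add_card_eq_card (cells_subset_iff.mpr F.sub)

lemma T_le_card (i j : ℕ) : F.T i j ≤ μ.card := by
  have := F.T_le_colLen_zero i j
  have := β.colLen_le_card 0
  have := F.card_add_card
  omega

lemma T_eq_zero_of_card_le {i j : ℕ} (h : μ.card ≤ i ∨ μ.card ≤ j) : F.T i j = 0 := by
  by_contra hT
  have hmem := F.mem_of_T_ne_zero hT
  have := lt_colLen_zero_of_mem hmem
  have := lt_rowLen_zero_of_mem hmem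
  have := μ.colLen_le_card 0
  have := μ.rowLen_le_card 0
  omega

def encode : Fin μ.card × Fin μ.card → Fin (μ.card + 1) :=
  fun p => ⟨F.T p.1 p.2, Nat.lt_succ_of_le (F.T_le_card _ _)⟩

end

variable {α β α' β' μ : YoungDiagram} (F : LRFilling α β μ) (G : LRFilling α' β' μ)

lemma T_eq_of_encode_eq (h : F.encode = G.encode) : F.T = G.T := by
  funext i j
  by_cases hij : i < μ.card ∧ j < μ.card
  · simpa [encode] using congrFun h (⟨i, hij.1⟩, ⟨j, hij.2⟩)
  · rw [F.T_eq_zero_of_card_le (by omega), G.T_eq_zero_of_card_le (by omega)]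

/-- `α` is where the entries vanish inside `μ`, and `β` is read off the content. -/
lemma sigma_eq_of_T_eq (h : F.T = G.T) :
    (⟨α, β, F⟩ : Σ α β, LRFilling α β μ) = ⟨α', β', G⟩ := by
  have hα : α = α' := by
    ext ⟨i, j⟩
    have hF := F.supp i j
    have hG := G.supp i j
    have hαμ := @F.sub (i, j)
    have hα'μ := @G.sub (i, j)
    rw [h] at hF
    simp only [mem_cells] at hαμ hα'μ ⊢
    tauto
  have hβ : β = β' := eq_of_rowLen_eq fun k => by
    rw [← F.card_filter_T_eq, ← G.card_filter_T_eq, h]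
  subst hα hβ
  obtain ⟨⟩ := F
  obtain ⟨⟩ := G
  subst h
  rfl

end LRFilling

instance LRFilling.finite_sigma (μ : YoungDiagram) : Finite (Σ α β, LRFilling α β μ) :=
  Finite.of_injective (fun x => x.2.2.encode) fun ⟨_, _, F⟩ ⟨_, _, G⟩ h =>
    LRFilling.sigma_eq_of_T_eq F G (LRFilling.T_eq_of_encode_eq F G h)

lemma finite_sigma_LRFilling_triple (μ ν lam : YoungDiagram) :
    Finite (Σ α β γ : YoungDiagram, LRFilling α β μ × LRFilling α γ ν × LRFilling β γ lam) := by
  refine Finite.of_injective (β := (Σ α β, LRFilling α β μ) × (Σ α γ, LRFilling α γ ν) ×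
    (Σ β γ, LRFilling β γ lam)) (fun x => (⟨x.1, x.2.1, x.2.2.2.1⟩, ⟨x.1, x.2.2.1, x.2.2.2.2.1⟩,
      ⟨x.2.1, x.2.2.1, x.2.2.2.2.2⟩)) ?_
  rintro ⟨α, β, γ, F₁, F₂, F₃⟩ ⟨α', β', γ', G₁, G₂, G₃⟩ h
  simp only [Prod.mk.injEq, Sigma.mk.injEq] at h
  obtain ⟨⟨rfl, rfl, rfl⟩, ⟨-, rfl, rfl⟩, ⟨-, -, rfl⟩⟩ := h
  rfl

/-- `Nat.card` vanishes on infinite types, so this needs `finite_sigma_LRFilling_triple`. -/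
lemma NL_pos_iff {μ ν lam : YoungDiagram} :
    0 < NL μ ν lam ↔ ∃ α β γ : YoungDiagram, Nonempty (LRFilling α β μ) ∧
      Nonempty (LRFilling α γ ν) ∧ Nonempty (LRFilling β γ lam) := by
  rw [NL, Nat.card_pos_iff, and_iff_left (finite_sigma_LRFilling_triple μ ν lam)]
  constructor
  · rintro ⟨α, β, γ, F₁, F₂, F₃⟩
    exact ⟨α, β, γ, ⟨F₁⟩, ⟨F₂⟩, ⟨F₃⟩⟩
  · rintro ⟨α, β, γ, ⟨F₁⟩, ⟨F₂⟩, ⟨F₃⟩⟩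
    exact ⟨α, β, γ, F₁, F₂, F₃⟩

/-- A move to a strictly higher row stays inside every initial segment of the reverse reading
word. -/
lemma ballot_of_shift_up (T : ℕ → ℕ → ℕ) (s : Finset (ℕ × ℕ))
    (hs : ∀ i j, T i j ≠ 0 → (i, j) ∈ s)
    (hshift : ∀ k, ∃ g : ℕ × ℕ → ℕ × ℕ, Set.InjOn g {p | T p.1 p.2 = k + 2} ∧
      ∀ p : ℕ × ℕ, T p.1 p.2 = k + 2 → T (g p).1 (g p).2 = k + 1 ∧ (g p).1 < p.1)
    (i j k : ℕ) :
    Nat.card {p : ℕ × ℕ // (p.1 < i ∨ (p.1 = i ∧ j ≤ p.2)) ∧ T p.1 p.2 = k + 2} ≤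
      Nat.card {p : ℕ × ℕ // (p.1 < i ∨ (p.1 = i ∧ j ≤ p.2)) ∧ T p.1 p.2 = k + 1} := by
  obtain ⟨g, hinj, hg⟩ := hshift k
  have : Finite {p : ℕ × ℕ // (p.1 < i ∨ (p.1 = i ∧ j ≤ p.2)) ∧ T p.1 p.2 = k + 1} :=
    Set.Finite.to_subtype (s.finite_toSet.subset fun p hp => hs p.1 p.2 (by rw [hp.2]; omega))
  refine Nat.card_le_card_of_injective
    (fun p => ⟨g p.1, ?_, (hg p.1 p.2.2).1⟩) fun p q h => Subtype.ext (hinj p.2.2 q.2.2 ?_)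
  · have := (hg p.1 p.2.2).2
    omega
  · exact congrArg Subtype.val h

section ColumnFilling
variable (α μ : YoungDiagram)

def skewColCount (k : ℕ) : ℕ :=
  ((range (μ.rowLen 0)).filter fun j => α.colLen j + k < μ.colLen j).card

lemma skewColCount_antitone : Antitone (skewColCount α μ) :=
  fun _ _ hk => card_le_card (monotone_filter_right _ fun j _ hj => by omega)

lemma skewColCount_colLen_zero : skewColCount α μ (μ.colLen 0) = 0 :=
  card_eq_zero.mpr (filter_eq_empty_iff.mpr fun j _ => by
    have := μ.colLen_anti 0 j (Nat.zero_le j)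
    omega)

def colContent : YoungDiagram :=
  ofAntitone (skewColCount α μ) (skewColCount_antitone α μ) (μ.colLen 0)

lemma rowLen_colContent (k : ℕ) : (colContent α μ).rowLen k = skewColCount α μ k :=
  rowLen_ofAntitone (skewColCount_colLen_zero α μ) k

def colFillingT (i j : ℕ) : ℕ :=
  if α.colLen j ≤ i ∧ i < μ.colLen j then i + 1 - α.colLen j else 0

lemma colFillingT_eq_succ_iff {i j k : ℕ} :
    colFillingT α μ i j = k + 1 ↔ i = α.colLen j + k ∧ α.colLen j + k < μ.colLen j := by
  unfold colFillingT
  grind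

lemma colFillingT_ne_zero_iff {i j : ℕ} :
    colFillingT α μ i j ≠ 0 ↔ (i, j) ∈ μ ∧ (i, j) ∉ α := by
  rw [mem_iff_lt_colLen, mem_iff_lt_colLen]
  unfold colFillingT
  split_ifs <;> omega

lemma card_colFillingT_eq_succ (k : ℕ) :
    Nat.card {p : ℕ × ℕ // colFillingT α μ p.1 p.2 = k + 1} = skewColCount α μ k := by
  have hset : {p : ℕ × ℕ | colFillingT α μ p.1 p.2 = k + 1} =
      (fun j => (α.colLen j + k, j)) ''
        ↑((range (μ.rowLen 0)).filter fun j => α.colLen j + k < μ.colLen j) := by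
    ext ⟨i, j⟩
    simp only [Set.mem_ofPred_eq, colFillingT_eq_succ_iff, coe_filter, mem_range, Set.mem_image,
      Prod.mk.injEq]
    constructor
    · rintro ⟨rfl, h⟩
      exact ⟨j, ⟨lt_rowLen_zero_of_mem (mem_iff_lt_colLen.mpr h), h⟩, rfl, rfl⟩
    · rintro ⟨j, ⟨-, h⟩, rfl, rfl⟩
      exact ⟨rfl, h⟩
  change Nat.card {p : ℕ × ℕ | colFillingT α μ p.1 p.2 = k + 1} = _
  rw [hset, Nat.card_image_of_injective (fun j j' h => (Prod.mk.inj h).2), Nat.card_coe_set_eq, Set.ncard_coe_finset]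
  rfl

variable {α μ}

def columnFilling (hle : α ≤ μ) : LRFilling α (colContent α μ) μ where
  sub := hle
  T := colFillingT α μ
  supp _ _ := colFillingT_ne_zero_iff α μ
  rows_weak i j₁ j₂ hj _ _ := by
    have := α.colLen_anti j₁ j₂ hj
    unfold colFillingT at *
    split_ifs at * <;> omega
  cols_strict _ _ _ _ _ _ := by
    unfold colFillingT at *
    split_ifs at * <;> omega
  content k := by rw [rowLen_colContent, card_colFillingT_eq_succ]
  ballot := ballot_of_shift_up _ μ.cells
    (fun _ _ h => (mem_cells _).mpr ((colFillingT_ne_zero_iff α μ).mp h).1)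
    fun k => ⟨fun p => (p.1 - 1, p.2), fun p hp q hq h => by
      simp only [Set.mem_ofPred_eq, colFillingT_eq_succ_iff] at hp hq
      simp only [Prod.mk.injEq] at h
      exact Prod.ext (by omega) h.2,
      fun p hp => by
        dsimp only
        rw [colFillingT_eq_succ_iff] at hp ⊢
        omega⟩

end ColumnFilling

section RowFilling
variable (β γ : YoungDiagram)

lemma rowLen_add_rowLen_antitone : Antitone fun i => β.rowLen i + γ.rowLen i :=
  fun i i' hi => add_le_add (β.rowLen_anti i i' hi) (γ.rowLen_anti i i' hi)

def rowSum : YoungDiagram :=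
  ofAntitone _ (rowLen_add_rowLen_antitone β γ) (β.colLen 0 + γ.colLen 0)

lemma mem_rowSum {i j : ℕ} : (i, j) ∈ rowSum β γ ↔ j < β.rowLen i + γ.rowLen i :=
  mem_ofAntitone (f := fun i => β.rowLen i + γ.rowLen i) (by
    rw [rowLen_eq_zero_of_colLen_le (by omega), rowLen_eq_zero_of_colLen_le (by omega)])

def rowFillingT (i j : ℕ) : ℕ :=
  if β.rowLen i ≤ j ∧ j < β.rowLen i + γ.rowLen i then i + 1 else 0

lemma rowFillingT_eq_succ_iff {i j k : ℕ} :
    rowFillingT β γ i j = k + 1 ↔ i = k ∧ β.rowLen k ≤ j ∧ j < β.rowLen k + γ.rowLen k := by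
  unfold rowFillingT
  grind

lemma rowFillingT_ne_zero_iff {i j : ℕ} :
    rowFillingT β γ i j ≠ 0 ↔ (i, j) ∈ rowSum β γ ∧ (i, j) ∉ β := by
  rw [mem_rowSum, mem_iff_lt_rowLen]
  unfold rowFillingT
  grind

lemma card_rowFillingT_eq_succ (k : ℕ) :
    Nat.card {p : ℕ × ℕ // rowFillingT β γ p.1 p.2 = k + 1} = γ.rowLen k := by
  have hset : {p : ℕ × ℕ | rowFillingT β γ p.1 p.2 = k + 1} =
      (fun j => (k, j)) '' Set.Ico (β.rowLen k) (β.rowLen k + γ.rowLen k) := by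
    ext ⟨i, j⟩
    simp only [Set.mem_ofPred_eq, rowFillingT_eq_succ_iff, Set.mem_image, Set.mem_Ico,
      Prod.mk.injEq]
    constructor
    · rintro ⟨rfl, h⟩
      exact ⟨j, h, rfl, rfl⟩
    · rintro ⟨j, h, rfl, rfl⟩
      exact ⟨rfl, h⟩
  change Nat.card {p : ℕ × ℕ | rowFillingT β γ p.1 p.2 = k + 1} = _
  rw [hset, Nat.card_image_of_injective (fun j j' h => (Prod.mk.inj h).2)]
  simp

def rowFilling : LRFilling β γ (rowSum β γ) where
  sub := cells_subset_iff.mp fun ⟨i, j⟩ h => (mem_cells _).mpr <| (mem_rowSum β γ).mpr <| by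
    have := mem_iff_lt_rowLen.mp ((mem_cells _).mp h)
    omega
  T := rowFillingT β γ
  supp _ _ := rowFillingT_ne_zero_iff β γ
  rows_weak _ _ _ _ _ _ := by
    unfold rowFillingT at *
    split_ifs at * <;> omega
  cols_strict _ _ _ _ _ _ := by
    unfold rowFillingT at *
    split_ifs at * <;> omega
  content := card_rowFillingT_eq_succ β γ
  ballot := ballot_of_shift_up _ (rowSum β γ).cells
    (fun _ _ h => (mem_cells _).mpr ((rowFillingT_ne_zero_iff β γ).mp h).1)
    fun k => ⟨fun p => (k, p.2 - β.rowLen (k + 1) + β.rowLen k), fun p hp q hq h => by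
      simp only [Set.mem_ofPred_eq, rowFillingT_eq_succ_iff] at hp hq
      simp only [Prod.mk.injEq] at h
      exact Prod.ext (by omega) (by omega),
      fun p hp => by
        dsimp only
        rw [rowFillingT_eq_succ_iff] at hp ⊢
        have := γ.rowLen_anti k (k + 1) k.le_succ
        omega⟩

end RowFilling

/-- For fixed `μ, ν`, there is a partition `lam` of size `k` with
`N_{μ,ν,lam} > 0` iff `k ≡ |μ Δ ν| (mod 2)` and `|μ Δ ν| ≤ k ≤ |μ| + |ν|`, where
`|μ Δ ν| = |μ| + |ν| - 2|μ ⊓ ν|`. -/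
theorem NL_exists_of_size_iff (μ ν : YoungDiagram) (k : ℕ) :
    (∃ lam : YoungDiagram, lam.card = k ∧ 0 < NL μ ν lam) ↔
      (k % 2 = (μ.card + ν.card - 2 * (μ ⊓ ν).card) % 2 ∧
        μ.card + ν.card - 2 * (μ ⊓ ν).card ≤ k ∧ k ≤ μ.card + ν.card) := by
  have hμ := YoungDiagram.card_mono (inf_le_left : μ ⊓ ν ≤ μ)
  have hν := YoungDiagram.card_mono (inf_le_right : μ ⊓ ν ≤ ν)
  constructor
  · rintro ⟨lam, rfl, hpos⟩
    obtain ⟨α, β, γ, ⟨F₁⟩, ⟨F₂⟩, ⟨F₃⟩⟩ := NL_pos_iff.mp hpos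
    have := YoungDiagram.card_mono (le_inf F₁.sub F₂.sub)
    have := F₁.card_add_card
    have := F₂.card_add_card
    have := F₃.card_add_card
    omega
  · rintro ⟨hpar, hlo, hhi⟩
    obtain ⟨α, hα, hαcard⟩ := exists_le_card_eq (μ ⊓ ν) (m := (μ.card + ν.card - k) / 2) (by omega)
    let F₁ := columnFilling (hα.trans inf_le_left)
    let F₂ := columnFilling (hα.trans inf_le_right)
    let F₃ := rowFilling (colContent α μ) (colContent α ν)
    have := F₁.card_add_card
    have := F₂.card_add_card
    have := F₃.card_add_card
    exact ⟨_, by omega, NL_pos_iff.mpr ⟨α, _, _, ⟨F₁⟩, ⟨F₂⟩, ⟨F₃⟩⟩⟩
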